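/- Let A be an algebra in the variety R. Then for all u,x,y,z in A, ((xu)y)z = 0, i.e., V_{x,y} R_z = 0 as operators. -/
import Mathlib


theorem stmt {F A : Type*} [Field F] [NonUnitalNonAssocRing A] [Module F A]
    [SMulCommClass F A A] [IsScalarTower F A A]
    (h1 : ∀ a b c : A, (a * b - b * a) * c - c * (a * b - b * a) = 0)
    (h2 : ∀ a b : A, (a * b) * a = 0)
    (h3 : ∀ a b c d : A, (a * b) * (c * d) = 0) :
    ∀ u x y z : A, ((x * u) * y) * z = 0 := by
  intro u x y z
  have key := h2 (x * u + z) y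
  simp only [add_mul, mul_add, h2 (x * u) y, h2 z y, zero_add, add_zero] at key
  rw [h3 z y x u, zero_add] at key
  exact key
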